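/- arXiv:2601.03544 — 2 statements merged into one kernel-verified Lean document; each statement's English description precedes it below -/
import Mathlib

section
/- Let (V, ω) be a finite-dimensional real symplectic vector space, C ⊆ V a coisotropic subspace (C^ω ⊆ C), and L ⊆ V ⊗ ℂ a complex Lagrangian subspace with respect to the complexified form ω_ℂ. Then the image L₀ = π₀(L ∩ C_ℂ) under the reduction map π₀ : C → C/C^ω is a complex Lagrangian subspace of (C/C^ω) ⊗ ℂ. -/
open scoped TensorProduct

/-- The symplectic complement of a subspace with respect to a bilinear form. -/
def SympComp {R M : Type*} [CommRing R] [AddCommGroup M] [Module R M]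
    (B : M →ₗ[R] M →ₗ[R] R) (C : Submodule R M) : Submodule R M where
  carrier := {v | ∀ c ∈ C, B v c = 0}
  add_mem' := by
    intro a b ha hb c hc
    simp [map_add, LinearMap.add_apply, ha c hc, hb c hc]
  zero_mem' := by
    intro c hc
    simp
  smul_mem' := by
    intro r a ha c hc
    simp [map_smul, LinearMap.smul_apply, ha c hc]

/-- A subspace is Lagrangian if it coincides with its symplectic complement. -/
def IsLagrangian {R M : Type*} [CommRing R] [AddCommGroup M] [Module R M]
    (B : M →ₗ[R] M →ₗ[R] R) (L : Submodule R M) : Prop :=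
  SympComp B L = L

/-- Complex conjugation on the complexification `ℂ ⊗[ℝ] V` of a real vector space. -/
noncomputable def conjTensor (V : Type*) [AddCommGroup V] [Module ℝ V] :
    (ℂ ⊗[ℝ] V) →ₗ[ℝ] (ℂ ⊗[ℝ] V) :=
  TensorProduct.map Complex.conjAe.toLinearMap LinearMap.id

/-!
Write `Ω` for the complexified form. Complexification commutes with symplectic complements,
`(C_ℂ)^Ω = (C^ω)_ℂ`, so `Ω` is again nondegenerate and `C_ℂ` is coisotropic for it. The reduced
form pulls back to `Ω` along `C_ℂ → V_ℂ`, so `L₀` is isotropic because `L` is. Conversely, if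
`π₀ p` is `ω₀`-orthogonal to `L₀`, then `p` is `Ω`-orthogonal to `L ∩ C_ℂ`, whose complement is
`L + (C^ω)_ℂ` by double orthogonality; removing the `(C^ω)_ℂ`-component, which `π₀` kills,
exhibits `π₀ p` as an element of `L₀`.
-/

section SympComp

variable {R M : Type*} [CommRing R] [AddCommGroup M] [Module R M] {B : LinearMap.BilinForm R M}

lemma mem_sympComp {C : Submodule R M} {v : M} : v ∈ SympComp B C ↔ ∀ c ∈ C, B v c = 0 :=
  Iff.rfl

lemma sympComp_sup (X Y : Submodule R M) :
    SympComp B (X ⊔ Y) = SympComp B X ⊓ SympComp B Y := by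
  ext v
  simp only [Submodule.mem_inf, mem_sympComp, Submodule.forall_mem_sup, map_add]
  exact ⟨fun h => ⟨fun x hx => by simpa using h x hx 0 (zero_mem _),
    fun y hy => by simpa using h 0 (zero_mem _) y hy⟩,
    fun h x hx y hy => by rw [h.1 x hx, h.2 y hy, add_zero]⟩

lemma sympComp_eq_orthogonal (hB : B.IsRefl) (X : Submodule R M) :
    SympComp B X = B.orthogonal X := by
  ext v
  exact ⟨fun h c hc => hB _ _ (h c hc), fun h c hc => hB _ _ (h c hc)⟩

lemma sympComp_top_eq_bot_iff : SympComp B ⊤ = ⊥ ↔ B.SeparatingLeft := by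
  simp [Submodule.eq_bot_iff, mem_sympComp, LinearMap.SeparatingLeft]

end SympComp

section FiniteDimensional

variable {K W : Type*} [Field K] [AddCommGroup W] [Module K W] [FiniteDimensional K W]
  {Ω : LinearMap.BilinForm K W}

lemma sympComp_sympComp (hrefl : Ω.IsRefl) (hnd : Ω.Nondegenerate) (X : Submodule K W) :
    SympComp Ω (SympComp Ω X) = X := by
  rw [sympComp_eq_orthogonal hrefl, sympComp_eq_orthogonal hrefl,
    LinearMap.BilinForm.orthogonal_orthogonal hnd hrefl]

lemma sympComp_inf (hrefl : Ω.IsRefl) (hnd : Ω.Nondegenerate) (X Y : Submodule K W) :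
    SympComp Ω (X ⊓ Y) = SympComp Ω X ⊔ SympComp Ω Y := by
  conv_lhs => rw [← sympComp_sympComp hrefl hnd X, ← sympComp_sympComp hrefl hnd Y]
  rw [← sympComp_sup, sympComp_sympComp hrefl hnd]

theorem IsLagrangian.map_comap {U Q : Type*} [AddCommGroup U] [Module K U]
    [AddCommGroup Q] [Module K Q] (hrefl : Ω.IsRefl) (hnd : Ω.Nondegenerate)
    {L : Submodule K W} (hL : IsLagrangian Ω L) {B : LinearMap.BilinForm K Q}
    (ι : U →ₗ[K] W) (π : U →ₗ[K] Q) (hπ : Function.Surjective π)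
    (hB : B.compl₁₂ π π = Ω.compl₁₂ ι ι)
    (hker : SympComp Ω (LinearMap.range ι) ≤ (LinearMap.ker π).map ι) :
    IsLagrangian B ((L.comap ι).map π) := by
  have hBπ (p q : U) : B (π p) (π q) = Ω (ι p) (ι q) := LinearMap.congr_fun₂ hB p q
  apply le_antisymm
  · intro u hu
    obtain ⟨p, rfl⟩ := hπ u
    have hp : ι p ∈ SympComp Ω (L ⊓ LinearMap.range ι) := by
      rintro _ ⟨hqL, q, rfl⟩
      rw [← hBπ]
      exact hu _ ⟨q, hqL, rfl⟩
    rw [sympComp_inf hrefl hnd, hL] at hp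
    obtain ⟨l, hl, _, hn, hsum⟩ := Submodule.mem_sup.mp hp
    obtain ⟨k, hk, rfl⟩ := hker hn
    refine ⟨p - k, ?_, by rw [map_sub, LinearMap.mem_ker.mp hk, sub_zero]⟩
    show ι (p - k) ∈ L
    rwa [map_sub, ← hsum, add_sub_cancel_right]
  · rintro _ ⟨p, hp, rfl⟩ _ ⟨q, hq, rfl⟩
    rw [← hL] at hp
    rw [hBπ]
    exact hp _ hq

end FiniteDimensional

section BaseChange

namespace LinearMap.BilinForm

variable {R A M N : Type*} [CommSemiring R] [CommSemiring A] [Algebra R A]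
  [AddCommMonoid M] [Module R M] [AddCommMonoid N] [Module R N]

lemma baseChange_flip (B : LinearMap.BilinForm R M) :
    LinearMap.flip (B.baseChange A) = LinearMap.BilinForm.baseChange A (LinearMap.flip B) := by
  ext
  simp

lemma baseChange_compl₁₂ (B : LinearMap.BilinForm R M) (f g : N →ₗ[R] M) :
    LinearMap.BilinForm.baseChange A (B.compl₁₂ f g) =
      (B.baseChange A).compl₁₂ (f.baseChange A) (g.baseChange A) := by
  ext
  simp

lemma apply_baseChange_one_tmul (B : LinearMap.BilinForm R M) (φ : A →ₗ[R] R)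
    (w : A ⊗[R] M) (m : M) :
    φ (B.baseChange A w (1 ⊗ₜ m)) = B (TensorProduct.lid R M (φ.rTensor M w)) m := by
  induction w using TensorProduct.induction_on with
  | zero => simp
  | tmul a v => simp [mul_comm]
  | add x y hx hy => simp only [map_add, LinearMap.add_apply, hx, hy]

end LinearMap.BilinForm

variable {R A M : Type*} [CommRing R] [CommRing A] [Algebra R A]
  [AddCommGroup M] [Module R M]

theorem LinearMap.IsAlt.baseChange [NoZeroDivisors A] [CharZero A] {B : LinearMap.BilinForm R M}
    (hB : LinearMap.IsAlt B) : LinearMap.IsAlt (B.baseChange A) := by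
  have hflip : LinearMap.flip B = -B := by
    ext x y
    exact (hB.neg x y).symm
  rw [LinearMap.isAlt_iff_eq_neg_flip, LinearMap.BilinForm.baseChange_flip, hflip]
  ext
  simp

theorem sympComp_baseChange [Module.Free R A] (B : LinearMap.BilinForm R M) (X : Submodule R M) :
    SympComp (B.baseChange A) (X.baseChange A) = (SympComp B X).baseChange A := by
  apply le_antisymm
  · intro w hw
    let b := Module.Free.chooseBasis R A
    have hcoeff (i) : TensorProduct.equivFinsuppOfBasisLeft b w i ∈ SympComp B X := by
      intro m hm
      rw [TensorProduct.equivFinsuppOfBasisLeft_apply,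
        ← LinearMap.BilinForm.apply_baseChange_one_tmul,
        hw _ (Submodule.tmul_mem_baseChange_of_mem 1 hm), map_zero]
    rw [← (TensorProduct.equivFinsuppOfBasisLeft b).symm_apply_apply w,
      TensorProduct.equivFinsuppOfBasisLeft_symm_apply]
    exact Submodule.finsuppSum_mem _ _ _ _
      fun i _ => Submodule.tmul_mem_baseChange_of_mem _ (hcoeff i)
  · rw [Submodule.baseChange_eq_span, Submodule.span_le]
    rintro _ ⟨v, hv, rfl⟩ y hy
    suffices X.baseChange A ≤ LinearMap.ker (B.baseChange A (1 ⊗ₜ v)) from this hy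
    rw [Submodule.baseChange_eq_span, Submodule.span_le]
    rintro _ ⟨m, hm, rfl⟩
    simp [hv m hm]

theorem LinearMap.SeparatingLeft.baseChange [Module.Free R A] {B : LinearMap.BilinForm R M}
    (hB : B.SeparatingLeft) : (B.baseChange A).SeparatingLeft := by
  rw [← sympComp_top_eq_bot_iff, ← Submodule.baseChange_top, sympComp_baseChange,
    sympComp_top_eq_bot_iff.mpr hB, Submodule.baseChange_bot]

lemma Submodule.baseChange_le_map_ker_baseChange_mkQ {C K : Submodule R M} (hKC : K ≤ C) :
    K.baseChange A ≤ (LinearMap.ker ((K.comap C.subtype).mkQ.baseChange A)).map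
      (C.subtype.baseChange A) := by
  rw [Submodule.baseChange_eq_span, Submodule.span_le]
  rintro _ ⟨k, hk, rfl⟩
  have hk0 : (K.comap C.subtype).mkQ ⟨k, hKC hk⟩ = 0 := (Submodule.Quotient.mk_eq_zero _).mpr hk
  refine ⟨1 ⊗ₜ ⟨k, hKC hk⟩, ?_, rfl⟩
  rw [SetLike.mem_coe, LinearMap.mem_ker, LinearMap.baseChange_tmul, hk0, TensorProduct.tmul_zero]

end BaseChange

/-- **Coisotropic reduction of complex Lagrangians.**  Let `(V, ω)` be a finite-dimensional
real symplectic vector space, `C ⊆ V` a coisotropic subspace and `L ⊆ V ⊗ ℂ` a complex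
Lagrangian subspace with respect to the complexified form.  Then the image
`L₀ = π₀(L ∩ C_ℂ)` under (the complexification of) the reduction map `π₀ : C → C/C^ω`
is a complex Lagrangian subspace of `(C/C^ω) ⊗ ℂ` with respect to (the complexification of)
the reduced symplectic form. -/
theorem coisotropic_reduction_lagrangian
    {V : Type*} [AddCommGroup V] [Module ℝ V] [FiniteDimensional ℝ V]
    (ω : LinearMap.BilinForm ℝ V) (halt : ∀ v, ω v v = 0)
    (hnd : LinearMap.BilinForm.Nondegenerate ω)
    (C : Submodule ℝ V) (hcoiso : SympComp ω C ≤ C)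
    (L : Submodule ℂ (ℂ ⊗[ℝ] V))
    (hL : IsLagrangian (LinearMap.BilinForm.baseChange ℂ ω) L)
    (ω₀ : LinearMap.BilinForm ℝ (C ⧸ Submodule.comap C.subtype (SympComp ω C)))
    (hω₀ : ∀ c c' : C,
      ω₀ ((Submodule.comap C.subtype (SympComp ω C)).mkQ c)
          ((Submodule.comap C.subtype (SympComp ω C)).mkQ c') = ω (c : V) (c' : V)) :
    IsLagrangian (LinearMap.BilinForm.baseChange ℂ ω₀)
      (Submodule.map
        (LinearMap.baseChange ℂ (Submodule.comap C.subtype (SympComp ω C)).mkQ)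
        (Submodule.comap (LinearMap.baseChange ℂ C.subtype) L)) := by
  have hΩ : LinearMap.IsAlt (ω.baseChange ℂ) := LinearMap.IsAlt.baseChange halt
  have hΩnd : (ω.baseChange ℂ).Nondegenerate :=
    hΩ.isRefl.nondegenerate_iff_separatingLeft.mpr hnd.1.baseChange
  refine IsLagrangian.map_comap hΩ.isRefl hΩnd hL _ _
    (LinearMap.baseChange_surjective ℂ (Submodule.mkQ_surjective _)) ?_ ?_
  · rw [← LinearMap.BilinForm.baseChange_compl₁₂, ← LinearMap.BilinForm.baseChange_compl₁₂]
    congr 1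
    ext c c'
    exact hω₀ c c'
  · change SympComp _ (C.baseChange ℂ) ≤ _
    rw [sympComp_baseChange]
    exact Submodule.baseChange_le_map_ker_baseChange_mkQ hcoiso
end

section
/- Let G be a connected Lie group and K ≤ G a compact subgroup with Lie algebras 𝔤, 𝔨. Then the fixed point set of the adjoint-induced K-action on 𝔤/𝔨 equals 𝔫_G(K)/𝔨, where 𝔫_G(K) is the Lie algebra of the normalizer N_G(K) = {g ∈ G | gKg⁻¹ = K}. In symbols: (𝔤/𝔨)^K = 𝔫_G(K)/𝔨. -/
/-- The Lie algebra of a subgroup `H` of the group of units of a Banach algebra `A`,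
consisting of those `X ∈ A` all of whose exponentials `exp(tX)` lie in `H`. -/
def lieAlgebraOf {A : Type*} [NormedRing A] [NormedAlgebra ℝ A] [CompleteSpace A]
    (H : Subgroup Aˣ) : Set A :=
  {X | ∀ t : ℝ, ∃ h ∈ H, (h : A) = NormedSpace.exp (t • X)}

/-!
Write `𝔨` for `lieAlgebraOf K`. Because `K` is closed, the Lie–Trotter formula
`exp (B + C) = lim (exp (B / n) * exp (C / n)) ^ n` makes `𝔨` a closed real subspace.

If `exp (ℝ X)` normalises `K` and `k ∈ K`, the Trotter approximants of
`exp (r (k X k⁻¹ - X))` are powers of `k exp (r X / n) k⁻¹ exp (-r X / n) ∈ K`,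
so `k X k⁻¹ - X ∈ 𝔨`.

Conversely, suppose `k X k⁻¹ - X ∈ 𝔨` for all `k ∈ K`. For `W ∈ 𝔨`, differentiating
`exp (r W) X exp (-r W) - X ∈ 𝔨` at `r = 0` gives `[X, 𝔨] ⊆ 𝔨`, hence
`Ad (exp (u X)) = exp (u ad X)` preserves `𝔨`.
With `Y = k X k⁻¹ - X` one has `exp (t X) k exp (-t X) = exp (t X) exp (-t (X + Y)) k`, and the
Trotter approximants of `exp (t X) exp (-t (X + Y))` telescope into products of the elements
`exp (-(t / n) Ad (exp (j t X / n)) Y) ∈ K`.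
-/

open NormedSpace Filter Topology

/-- The algebraic properties of `exp` (such as `exp_add_of_commute`) are stated for `ℚ`-normed
algebras. -/
noncomputable abbrev NormedAlgebra.ratOfReal (𝔸 : Type*) [NormedRing 𝔸] [NormedAlgebra ℝ 𝔸] :
    NormedAlgebra ℚ 𝔸 :=
  NormedAlgebra.restrictScalars ℚ ℝ 𝔸

attribute [local instance] NormedAlgebra.ratOfReal

theorem norm_pow_le_of_norm_one_le {R : Type*} [SeminormedRing R] (h1 : ‖(1 : R)‖ ≤ 1) (x : R)
    (n : ℕ) : ‖x ^ n‖ ≤ ‖x‖ ^ n := by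
  rcases n with _ | n
  · simpa using h1
  · exact norm_pow_le' x n.succ_pos

theorem norm_pow_sub_pow_le {R : Type*} [SeminormedRing R] {a b : R} {M : ℝ} (ha : ‖a‖ ≤ M)
    (hb : ‖b‖ ≤ M) (n : ℕ) : ‖a ^ n - b ^ n‖ ≤ n * M ^ (n - 1) * ‖a - b‖ := by
  induction n with
  | zero => simp
  | succ n ih =>
    rcases n with _ | n
    · simp
    have hM : 0 ≤ M := (norm_nonneg a).trans ha
    calc ‖a ^ (n + 2) - b ^ (n + 2)‖
        = ‖a * (a ^ (n + 1) - b ^ (n + 1)) + (a - b) * b ^ (n + 1)‖ := by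
          congr 1; rw [mul_sub, sub_mul, ← pow_succ', ← pow_succ']; abel
      _ ≤ ‖a‖ * ‖a ^ (n + 1) - b ^ (n + 1)‖ + ‖a - b‖ * ‖b‖ ^ (n + 1) :=
          (norm_add_le _ _).trans (add_le_add (norm_mul_le _ _)
            ((norm_mul_le _ _).trans (by gcongr; exact norm_pow_le' b n.succ_pos)))
      _ ≤ M * ((n + 1 : ℕ) * M ^ n * ‖a - b‖) + ‖a - b‖ * M ^ (n + 1) := by gcongr; exact ih
      _ = (n + 2 : ℕ) * M ^ (n + 1) * ‖a - b‖ := by push_cast; ring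

section BanachAlgebra

variable {𝔸 : Type*} [NormedRing 𝔸] [NormedAlgebra ℝ 𝔸]

noncomputable def mulLeftRingHom : 𝔸 →+* (𝔸 →L[ℝ] 𝔸) where
  toFun := ContinuousLinearMap.mul ℝ 𝔸
  map_one' := by ext; simp
  map_mul' x y := by ext; simp [mul_assoc]
  map_zero' := map_zero _
  map_add' := map_add _

noncomputable def mulRightRingHom : 𝔸ᵐᵒᵖ →+* (𝔸 →L[ℝ] 𝔸) where
  toFun x := (ContinuousLinearMap.mul ℝ 𝔸).flip x.unop
  map_one' := by ext; simp
  map_mul' x y := by ext; simp [mul_assoc]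
  map_zero' := by simp
  map_add' x y := by simp

@[simp] theorem mulLeftRingHom_apply (x y : 𝔸) : mulLeftRingHom x y = x * y := rfl

@[simp] theorem mulRightRingHom_apply (x : 𝔸ᵐᵒᵖ) (y : 𝔸) : mulRightRingHom x y = y * x.unop :=
  rfl

theorem continuous_mulLeftRingHom : Continuous (mulLeftRingHom (𝔸 := 𝔸)) :=
  (ContinuousLinearMap.mul ℝ 𝔸).continuous

theorem continuous_mulRightRingHom : Continuous (mulRightRingHom (𝔸 := 𝔸)) :=
  (ContinuousLinearMap.mul ℝ 𝔸).flip.continuous.comp MulOpposite.continuous_unop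

variable [CompleteSpace 𝔸]

theorem norm_exp_le_exp_norm (h1 : ‖(1 : 𝔸)‖ ≤ 1) (x : 𝔸) : ‖exp x‖ ≤ Real.exp ‖x‖ := by
  rw [Real.exp_eq_exp_ℝ]
  refine (exp_series_hasSum_exp' (𝕂 := ℝ) x).norm_le_of_bounded
    (exp_series_hasSum_exp' (𝕂 := ℝ) ‖x‖) fun n => ?_
  rw [norm_smul, Real.norm_of_nonneg (by positivity), smul_eq_mul]
  exact mul_le_mul_of_nonneg_left (norm_pow_le_of_norm_one_le h1 x n) (by positivity)

theorem exp_mul_exp_sub_exp_add_isLittleO (B C : 𝔸) :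
    (fun s : ℝ => exp (s • B) * exp (s • C) - exp (s • (B + C))) =o[𝓝 0] fun s => s := by
  have h := ((hasDerivAt_exp_smul_const' (𝕂 := ℝ) B 0).fun_mul
    (hasDerivAt_exp_smul_const' C 0)).sub (hasDerivAt_exp_smul_const' (B + C) 0)
  simpa using hasDerivAt_iff_isLittleO.1 h

theorem tendsto_exp_mul_exp_pow_of_norm_one_le (h1 : ‖(1 : 𝔸)‖ ≤ 1) (B C : 𝔸) :
    Tendsto (fun n : ℕ => (exp ((n : ℝ)⁻¹ • B) * exp ((n : ℝ)⁻¹ • C)) ^ n) atTop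
      (𝓝 (exp (B + C))) := by
  set a : ℕ → 𝔸 := fun n => exp ((n : ℝ)⁻¹ • B) * exp ((n : ℝ)⁻¹ • C)
  set b : ℕ → 𝔸 := fun n => exp ((n : ℝ)⁻¹ • (B + C))
  set β := ‖B‖ + ‖C‖
  have hb : ∀ n : ℕ, 1 ≤ n → b n ^ n = exp (B + C) := fun n hn => by
    rw [← exp_nsmul, ← Nat.cast_smul_eq_nsmul ℝ, smul_smul,
      mul_inv_cancel₀ (by positivity), one_smul]
  have hnorm : ∀ n : ℕ,
      ‖a n‖ ≤ Real.exp ((n : ℝ)⁻¹ * β) ∧ ‖b n‖ ≤ Real.exp ((n : ℝ)⁻¹ * β) := by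
    intro n
    have hexp : ∀ x : 𝔸, ‖exp ((n : ℝ)⁻¹ • x)‖ ≤ Real.exp ((n : ℝ)⁻¹ * ‖x‖) := fun x => by
      simpa [norm_smul] using norm_exp_le_exp_norm h1 ((n : ℝ)⁻¹ • x)
    constructor
    · calc ‖a n‖ ≤ Real.exp ((n : ℝ)⁻¹ * ‖B‖) * Real.exp ((n : ℝ)⁻¹ * ‖C‖) :=
            (norm_mul_le _ _).trans (mul_le_mul (hexp B) (hexp C) (norm_nonneg _) (by positivity))
        _ = Real.exp ((n : ℝ)⁻¹ * β) := by rw [← Real.exp_add, mul_add]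
    · exact (hexp _).trans (Real.exp_le_exp.2 (by gcongr; exact norm_add_le B C))
  have hsmall : Tendsto (fun n : ℕ => (n : ℝ) • (a n - b n)) atTop (𝓝 0) := by
    simpa [a, b] using ((exp_mul_exp_sub_exp_add_isLittleO B C).comp_tendsto
      tendsto_inv_atTop_nhds_zero_nat).tendsto_inv_smul_nhds_zero
  have hbound : ∀ n : ℕ, 1 ≤ n →
      ‖a n ^ n - exp (B + C)‖ ≤ Real.exp β * ‖(n : ℝ) • (a n - b n)‖ := by
    intro n hn
    rw [← hb n hn]
    obtain ⟨han, hbn⟩ := hnorm n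
    have hpow : Real.exp ((n : ℝ)⁻¹ * β) ^ (n - 1) ≤ Real.exp β := by
      calc Real.exp ((n : ℝ)⁻¹ * β) ^ (n - 1) ≤ Real.exp ((n : ℝ)⁻¹ * β) ^ n :=
            pow_le_pow_right₀ (Real.one_le_exp (by positivity)) (Nat.sub_le n 1)
        _ = Real.exp β := by
          rw [← Real.exp_nat_mul, ← mul_assoc, mul_inv_cancel₀ (by positivity), one_mul]
    calc ‖a n ^ n - b n ^ n‖ ≤ n * Real.exp ((n : ℝ)⁻¹ * β) ^ (n - 1) * ‖a n - b n‖ :=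
          norm_pow_sub_pow_le han hbn n
      _ ≤ Real.exp β * ‖(n : ℝ) • (a n - b n)‖ := by
          rw [norm_smul, Real.norm_natCast]
          have := mul_le_mul_of_nonneg_left hpow (by positivity : (0 : ℝ) ≤ n * ‖a n - b n‖)
          linarith
  refine tendsto_sub_nhds_zero_iff.1 (squeeze_zero_norm' (eventually_atTop.2 ⟨1, hbound⟩) ?_)
  simpa using hsmall.norm.const_mul (Real.exp β)

/-- The Lie–Trotter product formula. The left regular representation reduces it to the case
`‖1‖ ≤ 1`. -/
theorem tendsto_exp_mul_exp_pow (B C : 𝔸) :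
    Tendsto (fun n : ℕ => (exp ((n : ℝ)⁻¹ • B) * exp ((n : ℝ)⁻¹ • C)) ^ n) atTop
      (𝓝 (exp (B + C))) := by
  set L := mulLeftRingHom (𝔸 := 𝔸)
  have hexp : ∀ x : 𝔸, exp (L x) = L (exp x) := fun x =>
    (map_exp L continuous_mulLeftRingHom x).symm
  have hsmul : ∀ (r : ℝ) (x : 𝔸), L (r • x) = r • L x := fun r x =>
    map_smul (ContinuousLinearMap.mul ℝ 𝔸) r x
  have h := tendsto_exp_mul_exp_pow_of_norm_one_le ContinuousLinearMap.norm_id_le (L B) (L C)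
  simp only [← hsmul, ← map_add, hexp, ← map_mul, ← map_pow] at h
  simpa only [Function.comp_def, ContinuousLinearMap.apply_apply, L, mulLeftRingHom_apply,
    mul_one] using ((ContinuousLinearMap.apply ℝ 𝔸 (1 : 𝔸)).continuous.tendsto _).comp h

theorem exp_mul_mul_exp_neg_eq_exp_apply (X Y : 𝔸) :
    exp X * Y * exp (-X) = exp (mulLeftRingHom X - mulRightRingHom (MulOpposite.op X)) Y := by
  have hc : Commute (mulLeftRingHom X) (-mulRightRingHom (MulOpposite.op X)) := by
    ext; simp [mul_assoc]
  rw [sub_eq_add_neg, exp_add_of_commute hc, ← map_neg, ← MulOpposite.op_neg,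
    ← map_exp _ continuous_mulLeftRingHom, ← map_exp _ continuous_mulRightRingHom, exp_op]
  simp [mul_assoc]

end BanachAlgebra

theorem Submodule.exp_apply_mem {E : Type*} [NormedAddCommGroup E] [NormedSpace ℝ E]
    [CompleteSpace E] {V : Submodule ℝ E} (hV : IsClosed (V : Set E)) {T : E →L[ℝ] E}
    (hT : ∀ y ∈ V, T y ∈ V) {y : E} (hy : y ∈ V) : exp T y ∈ V := by
  have hpow : ∀ n : ℕ, (T ^ n) y ∈ V := fun n => by
    induction n with
    | zero => simpa using hy
    | succ n ih => rw [pow_succ']; exact hT _ ih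
  have hsum := (exp_series_hasSum_exp' (𝕂 := ℝ) T).mapL (ContinuousLinearMap.apply ℝ E y)
  refine hV.mem_of_tendsto hsum.tendsto_sum_nat (Eventually.of_forall fun m => ?_)
  exact V.sum_mem fun n _ => V.smul_mem _ (hpow n)

theorem HasDerivAt.mem_of_forall_mem {E : Type*} [NormedAddCommGroup E] [NormedSpace ℝ E]
    {V : Submodule ℝ E} (hV : IsClosed (V : Set E)) {f : ℝ → E} {f' : E} {x : ℝ}
    (hf : HasDerivAt f f' x) (h : ∀ r, f r ∈ V) : f' ∈ V :=
  hV.mem_of_tendsto (hasDerivAt_iff_tendsto_slope.1 hf) <| Eventually.of_forall fun r => by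
    rw [slope_def_module]; exact V.smul_mem _ (V.sub_mem (h r) (h x))

theorem Subgroup.mem_normalizer_of_conj_mem {G : Type*} [Group G] {H : Subgroup G} {g : G}
    (h₁ : ∀ h ∈ H, g * h * g⁻¹ ∈ H) (h₂ : ∀ h ∈ H, g⁻¹ * h * g ∈ H) :
    g ∈ Subgroup.normalizer (H : Set G) :=
  mem_normalizer_iff.2 fun h => ⟨h₁ h, fun hh => by simpa [mul_assoc] using h₂ _ hh⟩

theorem Subgroup.pow_mul_inv_mul_pow_mem {G : Type*} [Group G] {H : Subgroup G} {a b : G}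
    (h : ∀ j : ℕ, a ^ j * b * (a ^ j)⁻¹ ∈ H) (n : ℕ) : a ^ n * (a⁻¹ * b) ^ n ∈ H := by
  induction n with
  | zero => simp
  | succ n ih =>
    have hstep : a ^ (n + 1) * (a⁻¹ * b) ^ (n + 1) =
        a ^ n * b * (a ^ n)⁻¹ * (a ^ n * (a⁻¹ * b) ^ n) := by
      rw [pow_succ, pow_succ']; simp only [mul_assoc, mul_inv_cancel_left, inv_mul_cancel_left]
    rw [hstep]; exact H.mul_mem (h n) ih

theorem Subgroup.mem_of_tendsto_val {M : Type*} [Monoid M] [TopologicalSpace M] {K : Subgroup Mˣ}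
    (hK : IsClosed (Units.val '' (K : Set Mˣ))) {u : ℕ → Mˣ} (hu : ∀ᶠ n in atTop, u n ∈ K)
    {g : Mˣ} (h : Tendsto (fun n => (u n : M)) atTop (𝓝 g)) : g ∈ K := by
  obtain ⟨k, hk, e⟩ := hK.mem_of_tendsto h (hu.mono fun n hn => ⟨u n, hn, rfl⟩)
  rwa [← Units.ext e]

section Units

variable {A : Type*} [NormedRing A] [NormedAlgebra ℝ A] [CompleteSpace A]

noncomputable def expUnit (x : A) : Aˣ where
  val := exp x
  inv := exp (-x)
  val_inv := by rw [← exp_add_of_commute (Commute.refl x).neg_right, add_neg_cancel, exp_zero]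
  inv_val := by rw [← exp_add_of_commute (Commute.refl x).neg_left, neg_add_cancel, exp_zero]

@[simp] theorem val_expUnit (x : A) : (expUnit x : A) = exp x := rfl

@[simp] theorem val_inv_expUnit (x : A) : ((expUnit x)⁻¹ : Aˣ) = exp (-x) := rfl

@[simp] theorem expUnit_zero : expUnit (0 : A) = 1 := Units.ext (by simp)

theorem expUnit_neg (x : A) : expUnit (-x) = (expUnit x)⁻¹ := Units.ext (by simp)

theorem expUnit_pow (x : A) (n : ℕ) : expUnit x ^ n = expUnit (n • x) :=
  Units.ext (by rw [Units.val_pow_eq_pow_val, val_expUnit, val_expUnit, exp_nsmul])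

theorem conj_expUnit (u : Aˣ) (x : A) : u * expUnit x * u⁻¹ = expUnit (u * x * ↑u⁻¹) :=
  Units.ext (by simp [exp_units_conj])

theorem mem_lieAlgebraOf_iff {H : Subgroup Aˣ} {X : A} :
    X ∈ lieAlgebraOf H ↔ ∀ t : ℝ, expUnit (t • X) ∈ H := by
  refine forall_congr' fun t => ⟨fun ⟨h, hH, e⟩ => ?_, fun h => ⟨_, h, rfl⟩⟩
  rwa [show expUnit (t • X) = h from Units.ext e.symm]

theorem expUnit_mem_of_mem_lieAlgebraOf {H : Subgroup Aˣ} {X : A} (hX : X ∈ lieAlgebraOf H) :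
    expUnit X ∈ H := by
  simpa using mem_lieAlgebraOf_iff.1 hX 1

theorem mem_lieAlgebraOf_inf {H H' : Subgroup Aˣ} {X : A} :
    X ∈ lieAlgebraOf (H ⊓ H') ↔ X ∈ lieAlgebraOf H ∧ X ∈ lieAlgebraOf H' := by
  simp only [mem_lieAlgebraOf_iff, Subgroup.mem_inf, forall_and]

end Units

section ClosedSubgroup

variable {A : Type*} [NormedRing A] [NormedAlgebra ℝ A] [CompleteSpace A] {K : Subgroup Aˣ}
  (hK : IsClosed (Units.val '' (K : Set Aˣ)))
include hK

theorem expUnit_add_mem_of_forall {B C : A}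
    (h : ∀ n : ℕ, expUnit ((n : ℝ)⁻¹ • B) * expUnit ((n : ℝ)⁻¹ • C) ∈ K) :
    expUnit (B + C) ∈ K :=
  Subgroup.mem_of_tendsto_val hK (Eventually.of_forall fun n => K.pow_mem (h n) n)
    (by simpa using tendsto_exp_mul_exp_pow B C)

theorem isClosed_lieAlgebraOf : IsClosed (lieAlgebraOf K) := by
  have : lieAlgebraOf K = ⋂ t : ℝ, (fun X : A => exp (t • X)) ⁻¹' (Units.val '' (K : Set Aˣ)) := by
    ext X; simp only [Set.mem_iInter]; rfl
  rw [this]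
  exact isClosed_iInter fun t => hK.preimage (exp_continuous.comp (continuous_const_smul t))

def lieSubmodule : Submodule ℝ A where
  carrier := lieAlgebraOf K
  zero_mem' := mem_lieAlgebraOf_iff.2 fun t => by simp
  add_mem' {X Y} hX hY := mem_lieAlgebraOf_iff.2 fun t => by
    rw [smul_add]
    refine expUnit_add_mem_of_forall hK fun n => K.mul_mem ?_ ?_ <;> rw [smul_smul]
    exacts [mem_lieAlgebraOf_iff.1 hX _, mem_lieAlgebraOf_iff.1 hY _]
  smul_mem' c X hX := mem_lieAlgebraOf_iff.2 fun t => by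
    rw [smul_smul]; exact mem_lieAlgebraOf_iff.1 hX _

@[simp] theorem mem_lieSubmodule {X : A} : X ∈ lieSubmodule hK ↔ X ∈ lieAlgebraOf K := Iff.rfl

theorem commutator_mem_lieAlgebraOf {X W : A}
    (hX : ∀ k ∈ K, (k : A) * X * ((k⁻¹ : Aˣ) : A) - X ∈ lieAlgebraOf K)
    (hW : W ∈ lieAlgebraOf K) : X * W - W * X ∈ lieAlgebraOf K := by
  have hf : ∀ r : ℝ, exp (r • W) * X * exp (r • -W) - X ∈ lieSubmodule hK := fun r => by
    simpa using hX _ (mem_lieAlgebraOf_iff.1 hW r)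
  have hderiv : HasDerivAt (fun r : ℝ => exp (r • W) * X * exp (r • -W) - X) (W * X - X * W) 0 := by
    simpa [sub_eq_add_neg] using (((hasDerivAt_exp_smul_const' (𝕂 := ℝ) W 0).mul_const X).mul
      (hasDerivAt_exp_smul_const' (-W) 0)).sub_const X
  simpa using (lieSubmodule hK).neg_mem
    (hderiv.mem_of_forall_mem (isClosed_lieAlgebraOf hK) hf)

theorem exp_smul_mul_mul_exp_neg_smul_mem_lieAlgebraOf {X Y : A}
    (hX : ∀ W ∈ lieAlgebraOf K, X * W - W * X ∈ lieAlgebraOf K) (u : ℝ)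
    (hY : Y ∈ lieAlgebraOf K) : exp (u • X) * Y * exp (-(u • X)) ∈ lieAlgebraOf K := by
  rw [exp_mul_mul_exp_neg_eq_exp_apply]
  refine Submodule.exp_apply_mem (V := lieSubmodule hK) (isClosed_lieAlgebraOf hK)
    (fun W hW => ?_) hY
  simpa [smul_mul_assoc, mul_smul_comm, ← smul_sub] using (lieSubmodule hK).smul_mem u (hX W hW)

theorem expUnit_mul_expUnit_neg_add_mem {X Y : A}
    (hAd : ∀ u : ℝ, exp (u • X) * Y * exp (-(u • X)) ∈ lieAlgebraOf K) :
    expUnit X * expUnit (-(X + Y)) ∈ K := by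
  -- `a ^ j * b * a⁻ʲ = exp (-(1 / n) • Ad (exp ((j / n) • X)) Y)` for `a = exp (X / n)`,
  -- `b = exp (-Y / n)`
  have hconj : ∀ (n j : ℕ), expUnit ((n : ℝ)⁻¹ • X) ^ j * expUnit ((n : ℝ)⁻¹ • -Y)
      * (expUnit ((n : ℝ)⁻¹ • X) ^ j)⁻¹ ∈ K := fun n j => by
    rw [expUnit_pow, conj_expUnit]
    apply expUnit_mem_of_mem_lieAlgebraOf
    rw [← mem_lieSubmodule hK]
    convert (lieSubmodule hK).smul_mem (-(n : ℝ)⁻¹) (hAd (j * (n : ℝ)⁻¹)) using 1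
    rw [← Nat.cast_smul_eq_nsmul ℝ, smul_smul, val_expUnit, val_inv_expUnit, smul_neg, ← neg_smul,
      mul_smul_comm, smul_mul_assoc]
  have hval : ∀ n : ℕ, 1 ≤ n → ((expUnit ((n : ℝ)⁻¹ • X) ^ n *
      ((expUnit ((n : ℝ)⁻¹ • X))⁻¹ * expUnit ((n : ℝ)⁻¹ • -Y)) ^ n : Aˣ) : A) =
      exp X * (exp ((n : ℝ)⁻¹ • -X) * exp ((n : ℝ)⁻¹ • -Y)) ^ n := fun n hn => by
    rw [expUnit_pow, ← Nat.cast_smul_eq_nsmul ℝ, smul_smul, mul_inv_cancel₀ (by positivity),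
      one_smul, ← expUnit_neg, ← smul_neg]
    simp
  refine Subgroup.mem_of_tendsto_val hK
    (Eventually.of_forall fun n => K.pow_mul_inv_mul_pow_mem (hconj n) n) ?_
  rw [Units.val_mul, val_expUnit, val_expUnit, neg_add]
  refine ((tendsto_exp_mul_exp_pow (-X) (-Y)).const_mul (exp X)).congr' ?_
  filter_upwards [eventually_ge_atTop 1] with n hn
  rw [hval n hn]

theorem expUnit_smul_conj_mem {X : A}
    (hX : ∀ k ∈ K, (k : A) * X * ((k⁻¹ : Aˣ) : A) - X ∈ lieAlgebraOf K) (t : ℝ) {k : Aˣ}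
    (hk : k ∈ K) : expUnit (t • X) * k * (expUnit (t • X))⁻¹ ∈ K := by
  set Y := (k : A) * X * ((k⁻¹ : Aˣ) : A) - X
  have hAd : ∀ u : ℝ, exp (u • t • X) * (t • Y) * exp (-(u • t • X)) ∈ lieAlgebraOf K :=
    fun u => by
      rw [smul_smul]
      exact exp_smul_mul_mul_exp_neg_smul_mem_lieAlgebraOf hK
        (fun W hW => commutator_mem_lieAlgebraOf hK hX hW) _
        ((lieSubmodule hK).smul_mem t (hX k hk))
  have hconj : k * (expUnit (t • X))⁻¹ * k⁻¹ = expUnit (-(t • X + t • Y)) := by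
    rw [← expUnit_neg, conj_expUnit]
    congr 1
    simp only [Y, smul_sub, mul_neg, neg_mul, mul_smul_comm, smul_mul_assoc]
    abel
  have hsplit : expUnit (t • X) * k * (expUnit (t • X))⁻¹ =
      expUnit (t • X) * expUnit (-(t • X + t • Y)) * k := by
    rw [← hconj]; group
  rw [hsplit]
  exact K.mul_mem (expUnit_mul_expUnit_neg_add_mem hK hAd) hk

theorem conj_sub_mem_lieAlgebraOf {X : A}
    (hX : X ∈ lieAlgebraOf (Subgroup.normalizer (K : Set Aˣ))) {k : Aˣ} (hk : k ∈ K) :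
    (k : A) * X * ((k⁻¹ : Aˣ) : A) - X ∈ lieAlgebraOf K := by
  refine mem_lieAlgebraOf_iff.2 fun r => ?_
  rw [smul_sub, sub_eq_add_neg]
  refine expUnit_add_mem_of_forall hK fun n => ?_
  set g := expUnit (((n : ℝ)⁻¹ * r) • X)
  have hg : g ∈ Subgroup.normalizer (K : Set Aˣ) := mem_lieAlgebraOf_iff.1 hX _
  have hconj : expUnit ((n : ℝ)⁻¹ • r • ((k : A) * X * ((k⁻¹ : Aˣ) : A))) = k * g * k⁻¹ := by
    rw [conj_expUnit, mul_smul_comm, smul_mul_assoc, smul_smul]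
  have hinv : expUnit ((n : ℝ)⁻¹ • -(r • X)) = g⁻¹ := by rw [smul_neg, smul_smul, expUnit_neg]
  rw [hconj, hinv, show k * g * k⁻¹ * g⁻¹ = k * (g * k⁻¹ * g⁻¹) by group]
  exact K.mul_mem hk ((Subgroup.mem_normalizer_iff.1 hg k⁻¹).1 (K.inv_mem hk))

end ClosedSubgroup

theorem fixed_points_adjoint_quotient_eq_normalizer_general
    {A : Type*} [NormedRing A] [NormedAlgebra ℝ A] [CompleteSpace A]
    (G K : Subgroup Aˣ)
    (hKcompact : IsCompact ((fun u : Aˣ => (u : A)) '' (K : Set Aˣ)))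
    (X : A) (hX : X ∈ lieAlgebraOf G) :
    (∀ k ∈ K, (k : A) * X * ((k⁻¹ : Aˣ) : A) - X ∈ lieAlgebraOf K) ↔
      X ∈ lieAlgebraOf (G ⊓ Subgroup.normalizer K) := by
  have hK : IsClosed (Units.val '' (K : Set Aˣ)) := hKcompact.isClosed
  rw [mem_lieAlgebraOf_inf]
  refine ⟨fun hfix => ⟨hX, mem_lieAlgebraOf_iff.2 fun t => ?_⟩,
    fun hN k hk => conj_sub_mem_lieAlgebraOf hK hN.2 hk⟩
  refine Subgroup.mem_normalizer_of_conj_mem (fun k hk => expUnit_smul_conj_mem hK hfix t hk)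
    fun k hk => ?_
  simpa [← expUnit_neg, ← neg_smul] using expUnit_smul_conj_mem hK hfix (-t) hk

/-- **The fixed points of the adjoint action on `𝔤/𝔨` are `𝔫_G(K)/𝔨`.**  Let `G` be a
connected (Banach) Lie group, realized as a closed connected subgroup of the group of units
of a Banach algebra, and let `K ≤ G` be a compact subgroup with Lie algebras `𝔤`, `𝔨`.
Then `(𝔤/𝔨)^K = 𝔫_G(K)/𝔨`, where `𝔫_G(K)` is the Lie algebra of the normalizer
`N_G(K) = {g ∈ G | g K g⁻¹ = K}`; equivalently, for `X ∈ 𝔤`, one has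
`Ad_k X − X ∈ 𝔨` for all `k ∈ K` if and only if `X ∈ 𝔫_G(K)`. -/
theorem fixed_points_adjoint_quotient_eq_normalizer
    {A : Type*} [NormedRing A] [NormedAlgebra ℝ A] [CompleteSpace A]
    (G K : Subgroup Aˣ) (hKG : K ≤ G)
    (hGclosed : IsClosed ((fun u : Aˣ => (u : A)) '' (G : Set Aˣ)))
    (hGconn : IsConnected ((fun u : Aˣ => (u : A)) '' (G : Set Aˣ)))
    (hKcompact : IsCompact ((fun u : Aˣ => (u : A)) '' (K : Set Aˣ)))
    (X : A) (hX : X ∈ lieAlgebraOf G) :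
    (∀ k ∈ K, (k : A) * X * ((k⁻¹ : Aˣ) : A) - X ∈ lieAlgebraOf K) ↔
      X ∈ lieAlgebraOf (G ⊓ Subgroup.normalizer K) :=
  fixed_points_adjoint_quotient_eq_normalizer_general G K hKcompact X hX
end
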